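/- One-step monotonicity of the Kiefer–Wolfowitz update map: Let c ≥ 1, let W and W' be vectors in ℝ^c with coordinates listed in nondecreasing order such that the i-th coordinate of W is at most the i-th coordinate of W' for every i, let 0 ≤ S ≤ S' be service durations and let T ≥ 0 be an interarrival time. Then for every i, the i-th coordinate of R(W + S e − T f)^+ is at most the i-th coordinate of R(W' + S' e − T f)^+. -/

import Mathlib

/-- Rearrangement of a vector of reals into nondecreasing order. -/
noncomputable def sortVec {c : ℕ} (V : Fin c → ℝ) : Fin c → ℝ :=
  V ∘ Tuple.sort V

/-- The cardinality of `{i | V i ≤ a}` is invariant under permuting `V`. -/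
lemma card_le_perm {c : ℕ} (V : Fin c → ℝ) (σ : Equiv.Perm (Fin c)) (a : ℝ) :
    Fintype.card {i // (V ∘ σ) i ≤ a} = Fintype.card {i // V i ≤ a} :=
  Fintype.card_congr <| σ.subtypeEquiv fun i => by simp

/-- The sorted rearrangement is monotone with respect to pointwise order. -/
lemma sortVec_mono {c : ℕ} (V V' : Fin c → ℝ) (hVV' : ∀ i, V i ≤ V' i) :
    ∀ i, sortVec V i ≤ sortVec V' i := by
  intro j
  have hg : Monotone (sortVec V) := Tuple.monotone_sort V
  have hh : Monotone (sortVec V') := Tuple.monotone_sort V'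
  set a := sortVec V' j with ha
  rw [← (by rw [Fintype.card_subtype]; exact Tuple.lt_card_le_iff_apply_le_of_monotone hg :
    (j : ℕ) < Fintype.card {i // sortVec V i ≤ a} ↔ sortVec V j ≤ a)]
  have h1 : (j : ℕ) < Fintype.card {i // sortVec V' i ≤ a} := by
    rw [Fintype.card_subtype, Tuple.lt_card_le_iff_apply_le_of_monotone hh]
  have h2 : Fintype.card {i // sortVec V' i ≤ a} = Fintype.card {i // V' i ≤ a} :=
    card_le_perm V' (Tuple.sort V') a
  have h3 : Fintype.card {i // sortVec V i ≤ a} = Fintype.card {i // V i ≤ a} :=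
    card_le_perm V (Tuple.sort V) a
  have h4 : Fintype.card {i // V' i ≤ a} ≤ Fintype.card {i // V i ≤ a} :=
    Fintype.card_subtype_mono _ _ fun i hi => (hVV' i).trans hi
  omega

/-- The Kiefer–Wolfowitz workload update `R(W + S e − T f)⁺`: add the service duration
`S` to the first (smallest) coordinate, subtract the interarrival time `T` from every
coordinate, reorder in nondecreasing order, and replace negative coordinates by `0`. -/
noncomputable def kwUpdate {c : ℕ} (W : Fin c → ℝ) (S T : ℝ) : Fin c → ℝ :=
  fun i => max (sortVec (fun j => (if (j : ℕ) = 0 then W j + S else W j) - T) i) 0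

/-- **One-step monotonicity of the Kiefer–Wolfowitz update map.** -/
theorem kwUpdate_monotone
    (c : ℕ) (hc : 1 ≤ c)
    (W W' : Fin c → ℝ) (hW_sorted : Monotone W) (hW'_sorted : Monotone W')
    (hWW' : ∀ i, W i ≤ W' i)
    (S S' T : ℝ) (hS : 0 ≤ S) (hSS' : S ≤ S') (hT : 0 ≤ T) :
    ∀ i, kwUpdate W S T i ≤ kwUpdate W' S' T i := by
  intro i
  have h := sortVec_mono (V := fun j => (if (j : ℕ) = 0 then W j + S else W j) - T)
    (V' := fun j => (if (j : ℕ) = 0 then W' j + S' else W' j) - T)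
    (fun j => by
      split <;> [exact sub_le_sub_right (add_le_add (hWW' j) hSS') T;
        exact sub_le_sub_right (hWW' j) T]) i
  exact max_le_max h le_rfl
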